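/- Suppose complex-valued functions a, b, f on ℂ satisfy, for all u, v ∈ ℂ: (i) b(u+v)f(u)f(v) = f(u+v)(b(u)f(v) + b(v)f(u)), (ii) a(u)b(u+v)f(v) = b(v)f(u)f(u+v) + a(u+v)b(u)f(v), and (iii) a(u+v)f(u)f(v) = f(u+v)(a(u)a(v) + b(u)b(v)). Then the 9×9 matrix Ř(u) with diagonal entries a(u) at positions (1,1),(5,5),(9,9), f(u) at positions (2,2),(3,3),(4,4),(6,6),(7,7),(8,8), entries b(u) at positions (2,4),(6,8),(7,3), entries -b(u) at positions (3,7),(4,2),(8,6), and zeros elsewhere, satisfies Ř₁₂(u)Ř₂₃(u+v)Ř₁₂(v) = Ř₂₃(v)Ř₁₂(u+v)Ř₂₃(u) for all u, v ∈ ℂ. -/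
import Mathlib


/-- Embedding into the first two factors of `ℂ³⊗ℂ³⊗ℂ³`. -/
def emb12 (R : Matrix (Fin 3 × Fin 3) (Fin 3 × Fin 3) ℂ) :
    Matrix (Fin 3 × Fin 3 × Fin 3) (Fin 3 × Fin 3 × Fin 3) ℂ :=
  fun p q => R (p.1, p.2.1) (q.1, q.2.1) * (if p.2.2 = q.2.2 then 1 else 0)

/-- Embedding into the last two factors of `ℂ³⊗ℂ³⊗ℂ³`. -/
def emb23 (R : Matrix (Fin 3 × Fin 3) (Fin 3 × Fin 3) ℂ) :
    Matrix (Fin 3 × Fin 3 × Fin 3) (Fin 3 × Fin 3 × Fin 3) ℂ :=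
  fun p q => (if p.1 = q.1 then 1 else 0) * R (p.2.1, p.2.2) (q.2.1, q.2.2)

/-- The ansatz `Ř(u)` arising from the non-standard constant `R`-matrix of `D(A₄)`,
in the lexicographic basis of `ℂ³⊗ℂ³`: diagonal entries `a(u)` at positions
1, 5, 9, `f(u)` at the other diagonal positions, `b(u)` at positions
(2,4), (6,8), (7,3) and `-b(u)` at positions (3,7), (4,2), (8,6). -/
def Ransatz (a b f : ℂ → ℂ) (u : ℂ) : Matrix (Fin 3 × Fin 3) (Fin 3 × Fin 3) ℂ :=
  fun p q =>
    if p = q then (if p.1 = p.2 then a u else f u)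
    else if (p = (0, 1) ∧ q = (1, 0)) ∨ (p = (1, 2) ∧ q = (2, 1)) ∨
            (p = (2, 0) ∧ q = (0, 2)) then b u
    else if (p = (0, 2) ∧ q = (2, 0)) ∨ (p = (1, 0) ∧ q = (0, 1)) ∨
            (p = (2, 1) ∧ q = (1, 2)) then -b u
    else 0


lemma fm0 (h : 0 < 3) : (⟨0, h⟩ : Fin 3) = 0 := rfl
lemma fm1 (h : 1 < 3) : (⟨1, h⟩ : Fin 3) = 1 := rfl
lemma fm2 (h : 2 < 3) : (⟨2, h⟩ : Fin 3) = 2 := rfl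

lemma Rv0 (a b f : ℂ → ℂ) (u : ℂ) : Ransatz a b f u (0,0) (0,0) = a u := rfl
lemma Rv1 (a b f : ℂ → ℂ) (u : ℂ) : Ransatz a b f u (0,0) (0,1) = 0 := rfl
lemma Rv2 (a b f : ℂ → ℂ) (u : ℂ) : Ransatz a b f u (0,0) (0,2) = 0 := rfl
lemma Rv3 (a b f : ℂ → ℂ) (u : ℂ) : Ransatz a b f u (0,0) (1,0) = 0 := rfl
lemma Rv4 (a b f : ℂ → ℂ) (u : ℂ) : Ransatz a b f u (0,0) (1,1) = 0 := rfl
lemma Rv5 (a b f : ℂ → ℂ) (u : ℂ) : Ransatz a b f u (0,0) (1,2) = 0 := rfl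
lemma Rv6 (a b f : ℂ → ℂ) (u : ℂ) : Ransatz a b f u (0,0) (2,0) = 0 := rfl
lemma Rv7 (a b f : ℂ → ℂ) (u : ℂ) : Ransatz a b f u (0,0) (2,1) = 0 := rfl
lemma Rv8 (a b f : ℂ → ℂ) (u : ℂ) : Ransatz a b f u (0,0) (2,2) = 0 := rfl
lemma Rv9 (a b f : ℂ → ℂ) (u : ℂ) : Ransatz a b f u (0,1) (0,0) = 0 := rfl
lemma Rv10 (a b f : ℂ → ℂ) (u : ℂ) : Ransatz a b f u (0,1) (0,1) = f u := rfl
lemma Rv11 (a b f : ℂ → ℂ) (u : ℂ) : Ransatz a b f u (0,1) (0,2) = 0 := rfl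
lemma Rv12 (a b f : ℂ → ℂ) (u : ℂ) : Ransatz a b f u (0,1) (1,0) = b u := rfl
lemma Rv13 (a b f : ℂ → ℂ) (u : ℂ) : Ransatz a b f u (0,1) (1,1) = 0 := rfl
lemma Rv14 (a b f : ℂ → ℂ) (u : ℂ) : Ransatz a b f u (0,1) (1,2) = 0 := rfl
lemma Rv15 (a b f : ℂ → ℂ) (u : ℂ) : Ransatz a b f u (0,1) (2,0) = 0 := rfl
lemma Rv16 (a b f : ℂ → ℂ) (u : ℂ) : Ransatz a b f u (0,1) (2,1) = 0 := rfl
lemma Rv17 (a b f : ℂ → ℂ) (u : ℂ) : Ransatz a b f u (0,1) (2,2) = 0 := rfl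
lemma Rv18 (a b f : ℂ → ℂ) (u : ℂ) : Ransatz a b f u (0,2) (0,0) = 0 := rfl
lemma Rv19 (a b f : ℂ → ℂ) (u : ℂ) : Ransatz a b f u (0,2) (0,1) = 0 := rfl
lemma Rv20 (a b f : ℂ → ℂ) (u : ℂ) : Ransatz a b f u (0,2) (0,2) = f u := rfl
lemma Rv21 (a b f : ℂ → ℂ) (u : ℂ) : Ransatz a b f u (0,2) (1,0) = 0 := rfl
lemma Rv22 (a b f : ℂ → ℂ) (u : ℂ) : Ransatz a b f u (0,2) (1,1) = 0 := rfl
lemma Rv23 (a b f : ℂ → ℂ) (u : ℂ) : Ransatz a b f u (0,2) (1,2) = 0 := rfl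
lemma Rv24 (a b f : ℂ → ℂ) (u : ℂ) : Ransatz a b f u (0,2) (2,0) = -b u := rfl
lemma Rv25 (a b f : ℂ → ℂ) (u : ℂ) : Ransatz a b f u (0,2) (2,1) = 0 := rfl
lemma Rv26 (a b f : ℂ → ℂ) (u : ℂ) : Ransatz a b f u (0,2) (2,2) = 0 := rfl
lemma Rv27 (a b f : ℂ → ℂ) (u : ℂ) : Ransatz a b f u (1,0) (0,0) = 0 := rfl
lemma Rv28 (a b f : ℂ → ℂ) (u : ℂ) : Ransatz a b f u (1,0) (0,1) = -b u := rfl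
lemma Rv29 (a b f : ℂ → ℂ) (u : ℂ) : Ransatz a b f u (1,0) (0,2) = 0 := rfl
lemma Rv30 (a b f : ℂ → ℂ) (u : ℂ) : Ransatz a b f u (1,0) (1,0) = f u := rfl
lemma Rv31 (a b f : ℂ → ℂ) (u : ℂ) : Ransatz a b f u (1,0) (1,1) = 0 := rfl
lemma Rv32 (a b f : ℂ → ℂ) (u : ℂ) : Ransatz a b f u (1,0) (1,2) = 0 := rfl
lemma Rv33 (a b f : ℂ → ℂ) (u : ℂ) : Ransatz a b f u (1,0) (2,0) = 0 := rfl
lemma Rv34 (a b f : ℂ → ℂ) (u : ℂ) : Ransatz a b f u (1,0) (2,1) = 0 := rfl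
lemma Rv35 (a b f : ℂ → ℂ) (u : ℂ) : Ransatz a b f u (1,0) (2,2) = 0 := rfl
lemma Rv36 (a b f : ℂ → ℂ) (u : ℂ) : Ransatz a b f u (1,1) (0,0) = 0 := rfl
lemma Rv37 (a b f : ℂ → ℂ) (u : ℂ) : Ransatz a b f u (1,1) (0,1) = 0 := rfl
lemma Rv38 (a b f : ℂ → ℂ) (u : ℂ) : Ransatz a b f u (1,1) (0,2) = 0 := rfl
lemma Rv39 (a b f : ℂ → ℂ) (u : ℂ) : Ransatz a b f u (1,1) (1,0) = 0 := rfl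
lemma Rv40 (a b f : ℂ → ℂ) (u : ℂ) : Ransatz a b f u (1,1) (1,1) = a u := rfl
lemma Rv41 (a b f : ℂ → ℂ) (u : ℂ) : Ransatz a b f u (1,1) (1,2) = 0 := rfl
lemma Rv42 (a b f : ℂ → ℂ) (u : ℂ) : Ransatz a b f u (1,1) (2,0) = 0 := rfl
lemma Rv43 (a b f : ℂ → ℂ) (u : ℂ) : Ransatz a b f u (1,1) (2,1) = 0 := rfl
lemma Rv44 (a b f : ℂ → ℂ) (u : ℂ) : Ransatz a b f u (1,1) (2,2) = 0 := rfl
lemma Rv45 (a b f : ℂ → ℂ) (u : ℂ) : Ransatz a b f u (1,2) (0,0) = 0 := rfl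
lemma Rv46 (a b f : ℂ → ℂ) (u : ℂ) : Ransatz a b f u (1,2) (0,1) = 0 := rfl
lemma Rv47 (a b f : ℂ → ℂ) (u : ℂ) : Ransatz a b f u (1,2) (0,2) = 0 := rfl
lemma Rv48 (a b f : ℂ → ℂ) (u : ℂ) : Ransatz a b f u (1,2) (1,0) = 0 := rfl
lemma Rv49 (a b f : ℂ → ℂ) (u : ℂ) : Ransatz a b f u (1,2) (1,1) = 0 := rfl
lemma Rv50 (a b f : ℂ → ℂ) (u : ℂ) : Ransatz a b f u (1,2) (1,2) = f u := rfl
lemma Rv51 (a b f : ℂ → ℂ) (u : ℂ) : Ransatz a b f u (1,2) (2,0) = 0 := rfl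
lemma Rv52 (a b f : ℂ → ℂ) (u : ℂ) : Ransatz a b f u (1,2) (2,1) = b u := rfl
lemma Rv53 (a b f : ℂ → ℂ) (u : ℂ) : Ransatz a b f u (1,2) (2,2) = 0 := rfl
lemma Rv54 (a b f : ℂ → ℂ) (u : ℂ) : Ransatz a b f u (2,0) (0,0) = 0 := rfl
lemma Rv55 (a b f : ℂ → ℂ) (u : ℂ) : Ransatz a b f u (2,0) (0,1) = 0 := rfl
lemma Rv56 (a b f : ℂ → ℂ) (u : ℂ) : Ransatz a b f u (2,0) (0,2) = b u := rfl
lemma Rv57 (a b f : ℂ → ℂ) (u : ℂ) : Ransatz a b f u (2,0) (1,0) = 0 := rfl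
lemma Rv58 (a b f : ℂ → ℂ) (u : ℂ) : Ransatz a b f u (2,0) (1,1) = 0 := rfl
lemma Rv59 (a b f : ℂ → ℂ) (u : ℂ) : Ransatz a b f u (2,0) (1,2) = 0 := rfl
lemma Rv60 (a b f : ℂ → ℂ) (u : ℂ) : Ransatz a b f u (2,0) (2,0) = f u := rfl
lemma Rv61 (a b f : ℂ → ℂ) (u : ℂ) : Ransatz a b f u (2,0) (2,1) = 0 := rfl
lemma Rv62 (a b f : ℂ → ℂ) (u : ℂ) : Ransatz a b f u (2,0) (2,2) = 0 := rfl
lemma Rv63 (a b f : ℂ → ℂ) (u : ℂ) : Ransatz a b f u (2,1) (0,0) = 0 := rfl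
lemma Rv64 (a b f : ℂ → ℂ) (u : ℂ) : Ransatz a b f u (2,1) (0,1) = 0 := rfl
lemma Rv65 (a b f : ℂ → ℂ) (u : ℂ) : Ransatz a b f u (2,1) (0,2) = 0 := rfl
lemma Rv66 (a b f : ℂ → ℂ) (u : ℂ) : Ransatz a b f u (2,1) (1,0) = 0 := rfl
lemma Rv67 (a b f : ℂ → ℂ) (u : ℂ) : Ransatz a b f u (2,1) (1,1) = 0 := rfl
lemma Rv68 (a b f : ℂ → ℂ) (u : ℂ) : Ransatz a b f u (2,1) (1,2) = -b u := rfl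
lemma Rv69 (a b f : ℂ → ℂ) (u : ℂ) : Ransatz a b f u (2,1) (2,0) = 0 := rfl
lemma Rv70 (a b f : ℂ → ℂ) (u : ℂ) : Ransatz a b f u (2,1) (2,1) = f u := rfl
lemma Rv71 (a b f : ℂ → ℂ) (u : ℂ) : Ransatz a b f u (2,1) (2,2) = 0 := rfl
lemma Rv72 (a b f : ℂ → ℂ) (u : ℂ) : Ransatz a b f u (2,2) (0,0) = 0 := rfl
lemma Rv73 (a b f : ℂ → ℂ) (u : ℂ) : Ransatz a b f u (2,2) (0,1) = 0 := rfl
lemma Rv74 (a b f : ℂ → ℂ) (u : ℂ) : Ransatz a b f u (2,2) (0,2) = 0 := rfl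
lemma Rv75 (a b f : ℂ → ℂ) (u : ℂ) : Ransatz a b f u (2,2) (1,0) = 0 := rfl
lemma Rv76 (a b f : ℂ → ℂ) (u : ℂ) : Ransatz a b f u (2,2) (1,1) = 0 := rfl
lemma Rv77 (a b f : ℂ → ℂ) (u : ℂ) : Ransatz a b f u (2,2) (1,2) = 0 := rfl
lemma Rv78 (a b f : ℂ → ℂ) (u : ℂ) : Ransatz a b f u (2,2) (2,0) = 0 := rfl
lemma Rv79 (a b f : ℂ → ℂ) (u : ℂ) : Ransatz a b f u (2,2) (2,1) = 0 := rfl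
lemma Rv80 (a b f : ℂ → ℂ) (u : ℂ) : Ransatz a b f u (2,2) (2,2) = a u := rfl

lemma tri12 (X Y Z : Matrix (Fin 3 × Fin 3) (Fin 3 × Fin 3) ℂ) (p q : Fin 3 × Fin 3 × Fin 3) :
    (emb12 X * emb23 Y * emb12 Z) p q
      = ∑ r1 : Fin 3, ∑ r2 : Fin 3, ∑ s2 : Fin 3,
          X (p.1, p.2.1) (r1, r2) * Y (r2, p.2.2) (s2, q.2.2) * Z (r1, s2) (q.1, q.2.1) := by
  simp only [Matrix.mul_apply, emb12, emb23, Fintype.sum_prod_type]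
  simp [mul_ite, ite_mul, mul_zero, zero_mul, mul_one, one_mul, Finset.sum_ite_eq,
    Finset.sum_ite_eq', Finset.mul_sum, Finset.sum_mul, mul_assoc]
  exact Finset.sum_congr rfl fun x _ => Finset.sum_comm

lemma tri23 (X Y Z : Matrix (Fin 3 × Fin 3) (Fin 3 × Fin 3) ℂ) (p q : Fin 3 × Fin 3 × Fin 3) :
    (emb23 X * emb12 Y * emb23 Z) p q
      = ∑ s2 : Fin 3, ∑ r3 : Fin 3, ∑ r2 : Fin 3,
          X (p.2.1, p.2.2) (r2, r3) * Y (p.1, r2) (q.1, s2) * Z (s2, r3) (q.2.1, q.2.2) := by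
  simp only [Matrix.mul_apply, emb12, emb23, Fintype.sum_prod_type]
  simp [mul_ite, ite_mul, mul_zero, zero_mul, mul_one, one_mul, Finset.sum_ite_eq,
    Finset.sum_ite_eq', Finset.mul_sum, Finset.sum_mul, mul_assoc]

set_option maxHeartbeats 4000000 in
theorem ansatz_YBE (a b f : ℂ → ℂ)
    (h1 : ∀ u v : ℂ, b (u + v) * f u * f v = f (u + v) * (b u * f v + b v * f u))
    (h2 : ∀ u v : ℂ, a u * b (u + v) * f v =
      b v * f u * f (u + v) + a (u + v) * b u * f v)
    (h3 : ∀ u v : ℂ, a (u + v) * f u * f v = f (u + v) * (a u * a v + b u * b v)) :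
    ∀ u v : ℂ,
      emb12 (Ransatz a b f u) * emb23 (Ransatz a b f (u + v)) * emb12 (Ransatz a b f v) =
        emb23 (Ransatz a b f v) * emb12 (Ransatz a b f (u + v)) * emb23 (Ransatz a b f u) := by
  intro u v
  have H2 := h2 v u
  rw [add_comm v u] at H2
  ext ⟨i, j, k⟩ ⟨l, m, n⟩
  fin_cases i <;> fin_cases j <;> fin_cases k <;> fin_cases l <;> fin_cases m <;> fin_cases n <;>
    rw [tri12, tri23] <;>
    simp only [Fin.sum_univ_three, fm0, fm1, fm2, Rv0, Rv1, Rv2, Rv3, Rv4, Rv5, Rv6, Rv7, Rv8, Rv9, Rv10, Rv11, Rv12, Rv13, Rv14, Rv15, Rv16, Rv17, Rv18, Rv19, Rv20, Rv21, Rv22, Rv23, Rv24, Rv25, Rv26, Rv27, Rv28, Rv29, Rv30, Rv31, Rv32, Rv33, Rv34, Rv35, Rv36, Rv37, Rv38, Rv39, Rv40, Rv41, Rv42, Rv43, Rv44, Rv45, Rv46, Rv47, Rv48, Rv49, Rv50, Rv51, Rv52, Rv53, Rv54, Rv55, Rv56, Rv57, Rv58, Rv59, Rv60, Rv61, Rv62,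 Rv63, Rv64, Rv65, Rv66, Rv67, Rv68, Rv69, Rv70, Rv71, Rv72, Rv73, Rv74, Rv75, Rv76, Rv77, Rv78, Rv79, Rv80, mul_zero, zero_mul, add_zero,
      zero_add, mul_one, one_mul, neg_mul, mul_neg, neg_neg, neg_zero] <;>
    first
    | rfl
    | ring1
    | linear_combination h1 u v
    | linear_combination -(h1 u v)
    | linear_combination h2 u v
    | linear_combination -(h2 u v)
    | linear_combination H2
    | linear_combination -H2
    | linear_combination h3 u v
    | linear_combination -(h3 u v)
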